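/- Let m̃ = 1 + (the first index i with d_i = D). If m̃ = 1 let ord_R = ord_π; if m̃ ≥ 2 let θ = 1/(p^{m̃−2}(p−1)) and define ord_R(Σ_j c_j π^j) = min_j ( ord_p(c_j)·p^{m̃−2}(p−1) + j ) on ℤ_q[[π]] (the (p^θ, π)-adic order, normalized so ord_R(π) = 1 and ord_R(p) = p^{m̃−2}(p−1)). Then ord_R(π_i) ≥ p^i for all 0 ≤ i ≤ m̃ − 1, and ord_R(π_i) ≥ p^{m̃−1} for all i ≥ m̃ − 1. -/

import Mathlib

open PowerSeries
open scoped Classical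

noncomputable section

/-- The power series `Σ_{i≥0} X^(p^i − 1)`, the logarithmic derivative of the
Artin–Hasse exponential. -/
def ahLogDeriv (p : ℕ) (R : Type*) [CommRing R] : PowerSeries R :=
  PowerSeries.mk fun n => if ∃ i : ℕ, n + 1 = p ^ i then 1 else 0

/-- `E` is the Artin–Hasse exponential `exp(Σ_{i≥0} X^(p^i)/p^i)`: over a characteristic-zero
ring with no additive torsion this is equivalent to `E(0) = 1` together with the logarithmic
differential equation `E' = E · Σ_{i≥0} X^(p^i−1)`. -/
def IsArtinHasse (p : ℕ) {R : Type*} [CommRing R] (E : PowerSeries R) : Prop :=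
  PowerSeries.constantCoeff E = 1 ∧
    (PowerSeries.derivative R) E = E * ahLogDeriv p R

/-- Composition `f(g)` of formal power series (intended for `g` with zero constant term,
in which case this is the usual substitution). -/
def psComp {R : Type*} [CommRing R] (f g : PowerSeries R) : PowerSeries R :=
  PowerSeries.mk fun n => ∑ k ∈ Finset.range (n + 1),
    PowerSeries.coeff k f * PowerSeries.coeff n (g ^ k)

/-- `w = π_i`: the unique power series with zero constant term satisfying
`E(π_i) = (1+T)^(p^i)`. -/
def IsPiAH (p : ℕ) {R : Type*} [CommRing R] (E : PowerSeries R) (i : ℕ)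
    (w : PowerSeries R) : Prop :=
  PowerSeries.constantCoeff w = 0 ∧ psComp E w = (1 + PowerSeries.X) ^ p ^ i

/-- `bin z n` is the binomial coefficient `C(z, n)`, characterized by
`n! · bin z n = z(z−1)⋯(z−n+1)`. -/
def IsBinomial {R : Type*} [CommRing R] (bin : R → ℕ → R) : Prop :=
  ∀ z n, (n.factorial : R) * bin z n = ∏ i ∈ Finset.range n, (z - (i : R))

/-- The binomial series `(1+T)^z = Σ_n C(z,n) Tⁿ`. -/
def onePlusTPow {R : Type*} [CommRing R] (bin : R → ℕ → R) (z : R) : PowerSeries R :=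
  PowerSeries.mk fun n => bin z n

/-- `F^z = Σ_n C(z,n) (F−1)ⁿ` for a power series `F` with constant term `1`. -/
def psPow {R : Type*} [CommRing R] (bin : R → ℕ → R) (z : R) (F : PowerSeries R) :
    PowerSeries R :=
  PowerSeries.mk fun n => ∑ k ∈ Finset.range (n + 1),
    bin z k * PowerSeries.coeff n ((F - 1) ^ k)

/-- The canonical ring map `ℤ_p = W(𝔽_p) → W(F)` for a ring `F` of characteristic `p`. -/
def toWitt (p : ℕ) [Fact p.Prime] (F : Type*) [CommRing F] [CharP F p] :
    ℤ_[p] →+* WittVector p F :=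
  (WittVector.map (ZMod.castHom dvd_rfl F)).comp (WittVector.equiv p).symm.toRingHom

/-- `E(cst · η · x^u)` as a power series in `x` whose coefficients are power series
(in the variable of `η`). -/
def EmonoSub {R : Type*} [CommRing R] (E : PowerSeries R) (eta : PowerSeries R) (cst : R)
    (u : ℕ) : PowerSeries (PowerSeries R) :=
  if u = 0 then PowerSeries.C (psComp E (PowerSeries.C cst * eta))
  else PowerSeries.mk fun v =>
    if u ∣ v then PowerSeries.C (PowerSeries.coeff (v / u) E * cst ^ (v / u)) * eta ^ (v / u)
    else 0

/-- `E_h(x, η) = ∏_{u=0}^{d'} E(η ĥ_u x^u)` for `h` with (lifted) coefficients `co u`. -/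
def Eh {R : Type*} [CommRing R] (E : PowerSeries R) (eta : PowerSeries R) (co : ℕ → R)
    (d' : ℕ) : PowerSeries (PowerSeries R) :=
  ∏ u ∈ Finset.range (d' + 1), EmonoSub E eta (co u) u

/-- The partial product `∏_{i<n} E_{f_i}(x, π_i)`. -/
def EfPartial {R : Type*} [CommRing R] (E : PowerSeries R) (Pi : ℕ → PowerSeries R)
    (co : ℕ → ℕ → R) (d : ℕ → ℕ) (n : ℕ) : PowerSeries (PowerSeries R) :=
  ∏ i ∈ Finset.range n, Eh E (Pi i) (co i) (d i)

/-- `Ef = E_f(x) = ∏_{i=0}^∞ E_{f_i}(x, π_i)`, as the `(p,T)`-adic limit of the partial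
products: the `x^u`-coefficient of `E_f − ∏_{i<n} E_{f_i}` lies in `(p, T)^(n+1)`. -/
def IsEfProd (p : ℕ) {R : Type*} [CommRing R] (E : PowerSeries R) (Pi : ℕ → PowerSeries R)
    (co : ℕ → ℕ → R) (d : ℕ → ℕ) (Ef : PowerSeries (PowerSeries R)) : Prop :=
  ∀ n u : ℕ,
    PowerSeries.coeff u Ef - PowerSeries.coeff u (EfPartial E Pi co d n)
      ∈ (Ideal.span {(p : PowerSeries R), PowerSeries.X}) ^ (n + 1)

/-- `ord_R(g) ≥ r`:  for `mt = 1` the `T`-adic order of `g` is at least `r`; for `mt ≥ 2`,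
writing `g = Σ_j c_j T^j`, `min_j (ord_p(c_j)·p^(mt−2)(p−1) + j) ≥ r`
(the `(p^θ, T)`-adic order with `θ = 1/(p^(mt−2)(p−1))`, normalized by `ord_R(T) = 1`). -/
def ordRge (p : ℕ) {R : Type*} [CommRing R] (mt : ℕ) (g : PowerSeries R) (r : ℚ) : Prop :=
  ∀ j n : ℕ, ¬ ((p : R) ^ (n + 1) ∣ PowerSeries.coeff j g) →
    (if mt = 1 then r ≤ (j : ℚ)
     else r ≤ (n : ℚ) * ((p : ℚ) ^ (mt - 2) * ((p : ℚ) - 1)) + (j : ℚ))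



/-!
Since `E(0) = 1` and `E'(0) = 1`, `E - 1` has a compositional inverse, so substitution into `E` is
injective on series without constant term and there is an `H` with `E(H) = E^p`; hence
`π_{i+1} = H(π_i)`. Modulo `p`, Frobenius gives `Ē^p = Ē(X^p)`, so `H ≡ X^p` and
`π_{i+1} = π_i^p + p G(π_i)` with `G(0) = 0`. For the Gauss order with `ord X = 1`, `ord p = e`
this yields `ord π_{i+1} ≥ min (p · ord π_i) (e + ord π_i)`, and by induction
`ord π_i ≥ min (p^i) B` as soon as `(p - 1) B ≤ p e`. Take `e = p^(m̃-2)(p-1)`, `B = p^(m̃-1)`;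
for `m̃ = 1` the bound is just `π_i(0) = 0`.
-/

theorem exists_not_pow_dvd_of_not_pow_dvd_mul {α : Type*} [CommMonoid α] {a x y : α} {n : ℕ}
    (h : ¬ a ^ (n + 1) ∣ x * y) :
    ∃ n₁ n₂, n₁ + n₂ = n ∧ ¬ a ^ (n₁ + 1) ∣ x ∧ ¬ a ^ (n₂ + 1) ∣ y := by
  have hex : ∃ k, ¬ a ^ (k + 1) ∣ x := ⟨n, fun hx => h (hx.mul_right y)⟩
  have hn₁ : Nat.find hex ≤ n := Nat.find_min' hex fun hx => h (hx.mul_right y)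
  have hdvd : a ^ Nat.find hex ∣ x := by
    rcases Nat.eq_zero_or_pos (Nat.find hex) with h0 | hpos
    · rw [h0, pow_zero]
      exact one_dvd x
    · have := Nat.find_min hex (Nat.sub_lt hpos one_pos)
      rwa [not_not, Nat.sub_add_cancel (Nat.one_le_iff_ne_zero.mpr hpos.ne')] at this
  refine ⟨Nat.find hex, n - Nat.find hex, by omega, Nat.find_spec hex, fun hy => h ?_⟩
  have := mul_dvd_mul hdvd hy
  rwa [← pow_add, show Nat.find hex + (n - Nat.find hex + 1) = n + 1 by omega] at this

theorem min_mul_le_min {p e B x : ℚ} (hp : 1 ≤ p) (he : 0 ≤ e) (hB0 : 0 ≤ B)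
    (hB : (p - 1) * B ≤ p * e) :
    min (p * x) B ≤ min (p * min x B) (e + min x B) := by
  refine le_min ?_ ?_
  · calc min (p * x) B ≤ min (p * x) (p * B) := min_le_min_left _ (le_mul_of_one_le_left hB0 hp)
      _ = p * min x B := (mul_min_of_nonneg _ _ (by linarith)).symm
  · rcases le_total x B with hxB | hBx
    · rw [min_eq_left hxB]
      by_cases hx : (p - 1) * x ≤ e
      · exact (min_le_left _ _).trans (by linarith)
      · exact (min_le_right _ _).trans (by nlinarith)
    · rw [min_eq_right hBx]
      exact (min_le_right _ _).trans (by linarith)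

namespace PowerSeries

variable {R : Type*} [CommRing R]

theorem coeff_subst_eq_sum_range (f : R⟦X⟧) {g : R⟦X⟧} (hg : constantCoeff g = 0) (n : ℕ) :
    coeff n (f.subst g : R⟦X⟧) = ∑ k ∈ Finset.range (n + 1), coeff k f * coeff n (g ^ k) := by
  rw [coeff_subst' (HasSubst.of_constantCoeff_zero' hg)]
  refine finsum_eq_sum_of_support_subset _ fun k hk => ?_
  rw [Finset.coe_range, Set.mem_Iio]
  by_contra hkn
  have hXk : X ^ k ∣ g ^ k := pow_dvd_pow_of_dvd (X_dvd_iff.mpr hg) k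
  exact hk (by simp only [X_pow_dvd_iff.mp hXk n (by omega), smul_zero])

theorem psComp_eq_subst (f : R⟦X⟧) {g : R⟦X⟧} (hg : constantCoeff g = 0) :
    psComp f g = f.subst g := by
  ext n
  rw [coeff_subst_eq_sum_range f hg, psComp, coeff_mk]

theorem subst_sub_one (E : R⟦X⟧) {w : R⟦X⟧} (hw : constantCoeff w = 0) :
    ((E - 1).subst w : R⟦X⟧) = E.subst w - 1 := by
  rw [subst_sub (HasSubst.of_constantCoeff_zero' hw), ← map_one C, subst_C]
  rfl

theorem constantCoeff_sub_one {E : R⟦X⟧} (hE0 : constantCoeff E = 1) :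
    constantCoeff (E - 1) = 0 := by
  rw [map_sub, hE0, map_one, sub_self]

theorem isUnit_coeff_one_sub_one {E : R⟦X⟧} (hE1 : IsUnit (coeff 1 E)) :
    IsUnit (coeff 1 (E - 1)) := by
  rwa [map_sub, coeff_one, if_neg one_ne_zero, sub_zero]

theorem eq_of_subst_eq {E w₁ w₂ : R⟦X⟧} (hE0 : constantCoeff E = 1) (hE1 : IsUnit (coeff 1 E))
    (hw₁ : constantCoeff w₁ = 0) (hw₂ : constantCoeff w₂ = 0)
    (h : (E.subst w₁ : R⟦X⟧) = E.subst w₂) : w₁ = w₂ := by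
  set V := (E - 1).substInvOfIsUnit (isUnit_coeff_one_sub_one hE1)
  have hV (w : R⟦X⟧) (hw : constantCoeff w = 0) : w = V.subst (E.subst w - 1 : R⟦X⟧) := by
    rw [← subst_sub_one E hw, ← subst_comp_subst_apply (HasSubst.of_constantCoeff_zero'
      (constantCoeff_sub_one hE0)) (HasSubst.of_constantCoeff_zero' hw),
      subst_substInvOfIsUnit_left _ (constantCoeff_sub_one hE0), subst_X
      (HasSubst.of_constantCoeff_zero' hw)]
  rw [hV w₁ hw₁, hV w₂ hw₂, h]

theorem exists_subst_eq {E g : R⟦X⟧} (hE0 : constantCoeff E = 1) (hE1 : IsUnit (coeff 1 E))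
    (hg : constantCoeff g = 1) : ∃ H : R⟦X⟧, constantCoeff H = 0 ∧ E.subst H = g := by
  set V := (E - 1).substInvOfIsUnit (isUnit_coeff_one_sub_one hE1)
  have hg1 : constantCoeff (g - 1) = 0 := constantCoeff_sub_one hg
  have hH : constantCoeff (V.subst (g - 1) : R⟦X⟧) = 0 :=
    constantCoeff_subst_eq_zero hg1 V (constantCoeff_substInvOfIsUnit _ _)
  refine ⟨V.subst (g - 1), hH, ?_⟩
  rw [sub_eq_iff_eq_add.mp (subst_sub_one E hH).symm, ← subst_comp_subst_apply
    (HasSubst.substInvOfIsUnit _ _) (HasSubst.of_constantCoeff_zero' hg1),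
    subst_substInvOfIsUnit_right _ (constantCoeff_sub_one hE0), subst_X
    (HasSubst.of_constantCoeff_zero' hg1), sub_add_cancel]

theorem eq_subst_of_subst_eq_pow {E H w w' : R⟦X⟧} {n : ℕ} (hE0 : constantCoeff E = 1)
    (hE1 : IsUnit (coeff 1 E)) (hH0 : constantCoeff H = 0) (hH : E.subst H = E ^ n)
    (hw : constantCoeff w = 0) (hw' : constantCoeff w' = 0)
    (h : (E.subst w' : R⟦X⟧) = (E.subst w) ^ n) : w' = H.subst w := by
  refine eq_of_subst_eq hE0 hE1 hw' (constantCoeff_subst_eq_zero hw H hH0) ?_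
  rw [h, ← subst_comp_subst_apply (HasSubst.of_constantCoeff_zero' hH0)
    (HasSubst.of_constantCoeff_zero' hw), hH, subst_pow (HasSubst.of_constantCoeff_zero' hw)]

theorem pow_eq_subst_X_pow {p : ℕ} [Fact p.Prime] (f : (ZMod p)⟦X⟧) :
    f ^ p = f.subst (X ^ p : (ZMod p)⟦X⟧) := by
  rw [← MvPowerSeries.map_frobenius_expand p (Fact.out : p.Prime).ne_zero, ZMod.frobenius_zmod,
    MvPowerSeries.map_id, RingHom.id_apply]
  exact expand_apply p (Fact.out : p.Prime).ne_zero f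

theorem exists_eq_add_C_mul_of_map_eq {S : Type*} [CommRing S] {φ : R →+* S} {a : R}
    (hker : RingHom.ker φ = Ideal.span {a}) {f g : R⟦X⟧} (h : map φ f = map φ g) :
    ∃ G : R⟦X⟧, f = g + C a * G := by
  have hdvd (n : ℕ) : a ∣ coeff n f - coeff n g := by
    rw [← Ideal.mem_span_singleton, ← hker, RingHom.mem_ker, map_sub, ← coeff_map, ← coeff_map,
      h, sub_self]
  choose c hc using hdvd
  exact ⟨mk c, by ext n; rw [map_add, coeff_C_mul, coeff_mk, ← hc]; ring⟩

/-- `ord f ≥ r` for the Gauss order on `R⟦X⟧` normalised by `ord X = 1` and `ord a = e`;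
a coefficient not divisible by `a ^ (n + 1)` is counted as having `a`-order at most `n`. -/
def GaussOrderGE (a : R) (e : ℚ) (f : R⟦X⟧) (r : ℚ) : Prop :=
  ∀ j n : ℕ, ¬ a ^ (n + 1) ∣ coeff j f → r ≤ n * e + j

namespace GaussOrderGE

variable {a : R} {e r s : ℚ} {f g : R⟦X⟧}

theorem mono (hf : GaussOrderGE a e f r) (hsr : s ≤ r) : GaussOrderGE a e f s :=
  fun j n h => hsr.trans (hf j n h)

theorem of_constantCoeff_eq_zero (he : 0 ≤ e) (hf : constantCoeff f = 0) :
    GaussOrderGE a e f 1 := by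
  intro j n h
  rcases Nat.eq_zero_or_pos j with rfl | hj
  · rw [coeff_zero_eq_constantCoeff_apply, hf] at h
    exact absurd (dvd_zero _) h
  · have : (1 : ℚ) ≤ j := by exact_mod_cast hj
    nlinarith [(Nat.cast_nonneg n : (0 : ℚ) ≤ n)]

theorem one (he : 0 ≤ e) : GaussOrderGE a e (1 : R⟦X⟧) 0 := by
  intro j n h
  rcases Nat.eq_zero_or_pos j with rfl | hj
  · simpa using mul_nonneg (Nat.cast_nonneg n) he
  · rw [coeff_one, if_neg hj.ne'] at h
    exact absurd (dvd_zero _) h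

theorem add (hf : GaussOrderGE a e f r) (hg : GaussOrderGE a e g r) :
    GaussOrderGE a e (f + g) r := by
  intro j n h
  by_cases hfj : a ^ (n + 1) ∣ coeff j f
  · exact hg j n fun hgj => h (by rw [map_add]; exact dvd_add hfj hgj)
  · exact hf j n hfj

theorem mul (hf : GaussOrderGE a e f r) (hg : GaussOrderGE a e g s) :
    GaussOrderGE a e (f * g) (r + s) := by
  intro j n h
  rw [coeff_mul] at h
  obtain ⟨⟨k, l⟩, hkl, hterm⟩ : ∃ q ∈ Finset.HasAntidiagonal.antidiagonal j,
      ¬ a ^ (n + 1) ∣ coeff q.1 f * coeff q.2 g := by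
    by_contra! hall
    exact h (Finset.dvd_sum hall)
  obtain ⟨n₁, n₂, rfl, h₁, h₂⟩ := exists_not_pow_dvd_of_not_pow_dvd_mul hterm
  rw [Finset.HasAntidiagonal.mem_antidiagonal] at hkl
  subst hkl
  have := add_le_add (hf k n₁ h₁) (hg l n₂ h₂)
  push_cast
  linarith

theorem pow (he : 0 ≤ e) (hf : GaussOrderGE a e f r) (k : ℕ) :
    GaussOrderGE a e (f ^ k) (k * r) := by
  induction k with
  | zero => simpa using one he
  | succ k ih => simpa [pow_succ, add_mul] using ih.mul hf

theorem C_mul (hf : GaussOrderGE a e f r) : GaussOrderGE a e (C a * f) (e + r) := by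
  intro j n h
  rw [coeff_C_mul] at h
  rcases n with _ | n
  · simp at h
  · have := hf j n fun hd => h (by rw [pow_succ']; exact mul_dvd_mul_left a hd)
    push_cast
    linarith

theorem subst (he : 0 ≤ e) (hr : 0 ≤ r) {G w : R⟦X⟧} (hG : constantCoeff G = 0)
    (hw0 : constantCoeff w = 0) (hw : GaussOrderGE a e w r) : GaussOrderGE a e (G.subst w) r := by
  intro j n h
  rw [coeff_subst_eq_sum_range G hw0] at h
  obtain ⟨k, -, hterm⟩ : ∃ k ∈ Finset.range (j + 1),
      ¬ a ^ (n + 1) ∣ coeff k G * coeff j (w ^ k) := by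
    by_contra! hall
    exact h (Finset.dvd_sum hall)
  have hk : 1 ≤ k := by
    by_contra! hk
    rw [Nat.lt_one_iff.mp hk, coeff_zero_eq_constantCoeff_apply, hG, zero_mul] at hterm
    exact hterm (dvd_zero _)
  have hk' : (1 : ℚ) ≤ k := by exact_mod_cast hk
  have := hw.pow he k j n fun hd => hterm (hd.mul_left _)
  nlinarith

end GaussOrderGE

end PowerSeries

theorem IsArtinHasse.coeff_one {R : Type*} [CommRing R] {p : ℕ} {E : R⟦X⟧}
    (hE : IsArtinHasse p E) : coeff 1 E = 1 := by
  have h := congrArg (coeff 0) hE.2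
  rw [coeff_derivative, coeff_zero_eq_constantCoeff_apply, map_mul, hE.1, one_mul,
    ← coeff_zero_eq_constantCoeff_apply, ahLogDeriv, coeff_mk, if_pos ⟨0, rfl⟩] at h
  simpa using h

namespace PadicInt

open PowerSeries

variable {p : ℕ} [Fact p.Prime]

theorem exists_subst_eq_pow {E : ℤ_[p]⟦X⟧} (hE0 : constantCoeff E = 1)
    (hE1 : IsUnit (coeff 1 E)) :
    ∃ G : ℤ_[p]⟦X⟧, constantCoeff G = 0 ∧ E.subst (X ^ p + C (p : ℤ_[p]) * G) = E ^ p := by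
  obtain ⟨H, hH0, hH⟩ := exists_subst_eq hE0 hE1 (g := E ^ p) (by rw [map_pow, hE0, one_pow])
  have hmod : map toZMod H = X ^ p := by
    have hXp : constantCoeff (X ^ p : (ZMod p)⟦X⟧) = 0 := by
      rw [map_pow, constantCoeff_X, zero_pow (Fact.out : p.Prime).ne_zero]
    refine eq_of_subst_eq (E := map toZMod E)
      (by change toZMod (constantCoeff E) = 1; rw [hE0, map_one])
      (by rw [coeff_map]; exact hE1.map _)
      (by change toZMod (constantCoeff H) = 0; rw [hH0, map_zero]) hXp ?_
    have := map_subst (HasSubst.of_constantCoeff_zero' hH0) (h := toZMod) E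
    rw [← pow_eq_subst_X_pow, ← map_pow, ← hH]
    exact this.symm
  obtain ⟨G, hG⟩ := exists_eq_add_C_mul_of_map_eq (ker_toZMod.trans maximalIdeal_eq_span_p)
    (g := X ^ p) (by rw [hmod, map_pow, map_X])
  refine ⟨G, ?_, hG ▸ hH⟩
  have h0 := congrArg constantCoeff hG
  rw [hH0, map_add, map_mul, constantCoeff_C, map_pow, constantCoeff_X,
    zero_pow (Fact.out : p.Prime).ne_zero, zero_add, eq_comm, mul_eq_zero] at h0
  exact h0.resolve_left (Nat.cast_ne_zero.mpr (Fact.out : p.Prime).ne_zero)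

theorem gaussOrderGE_of_subst_succ_eq_pow {E : ℤ_[p]⟦X⟧} (hE0 : constantCoeff E = 1)
    (hE1 : IsUnit (coeff 1 E)) {w : ℕ → ℤ_[p]⟦X⟧} (hw0 : ∀ i, constantCoeff (w i) = 0)
    (hw : ∀ i, (E.subst (w (i + 1)) : ℤ_[p]⟦X⟧) = (E.subst (w i)) ^ p) {e B : ℚ} (he : 0 ≤ e)
    (hB0 : 0 ≤ B) (hB : (p - 1) * B ≤ p * e) (i : ℕ) :
    GaussOrderGE (p : ℤ_[p]) e (w i) (min ((p : ℚ) ^ i) B) := by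
  obtain ⟨G, hG0, hG⟩ := exists_subst_eq_pow hE0 hE1
  have hH0 : constantCoeff (X ^ p + C (p : ℤ_[p]) * G) = 0 := by
    rw [map_add, map_mul, hG0, mul_zero, add_zero, map_pow, constantCoeff_X,
      zero_pow (Fact.out : p.Prime).ne_zero]
  have hrec (i : ℕ) : w (i + 1) = w i ^ p + C (p : ℤ_[p]) * G.subst (w i) := by
    have hs := HasSubst.of_constantCoeff_zero' (hw0 i)
    rw [eq_subst_of_subst_eq_pow hE0 hE1 hH0 hG (hw0 i) (hw0 (i + 1)) (hw i), subst_add hs,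
      subst_pow hs, subst_X hs, subst_mul hs, subst_C]
    rfl
  have hp : (1 : ℚ) ≤ p := by exact_mod_cast (Fact.out : p.Prime).one_le
  induction i with
  | zero => exact (GaussOrderGE.of_constantCoeff_eq_zero he (hw0 0)).mono (by simp)
  | succ i ih =>
    have hr : 0 ≤ min ((p : ℚ) ^ i) B := le_min (by positivity) hB0
    have hstep := min_mul_le_min (x := (p : ℚ) ^ i) hp he hB0 hB
    rw [hrec, pow_succ']
    exact ((ih.pow he p).mono ((hstep.trans (min_le_left _ _)))).add
      ((ih.subst he hr hG0 (hw0 i)).C_mul.mono (hstep.trans (min_le_right _ _)))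

end PadicInt

theorem ordRge_iff_gaussOrderGE {R : Type*} [CommRing R] (p mt : ℕ) (g : R⟦X⟧) (r : ℚ) :
    ordRge p mt g r ↔
      GaussOrderGE (p : R) (if mt = 1 then 0 else (p : ℚ) ^ (mt - 2) * ((p : ℚ) - 1)) g r := by
  unfold ordRge GaussOrderGE
  split_ifs <;> simp

theorem pi_i_ordR_bounds_general (p : ℕ) [Fact p.Prime]
    (E : PowerSeries ℤ_[p]) (hE : IsArtinHasse p E)
    (Pi : ℕ → PowerSeries ℤ_[p]) (hPi : ∀ i, IsPiAH p E i (Pi i))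
    (mt : ℕ) :
    (∀ i ≤ mt - 1, ordRge p mt (Pi i) ((p : ℚ) ^ i)) ∧
      (∀ i, mt - 1 ≤ i → ordRge p mt (Pi i) ((p : ℚ) ^ (mt - 1))) := by
  have hp : (1 : ℚ) ≤ p := by exact_mod_cast (Fact.out : p.Prime).one_le
  have hPi0 (i : ℕ) : constantCoeff (Pi i) = 0 := (hPi i).1
  have hsubst (i : ℕ) : E.subst (Pi i) = (1 + X) ^ p ^ i := psComp_eq_subst E (hPi0 i) ▸ (hPi i).2
  have key (i : ℕ) : GaussOrderGE (p : ℤ_[p])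
      (if mt = 1 then 0 else (p : ℚ) ^ (mt - 2) * ((p : ℚ) - 1)) (Pi i)
      (min ((p : ℚ) ^ i) ((p : ℚ) ^ (mt - 1))) := by
    split_ifs with hmt
    · exact (GaussOrderGE.of_constantCoeff_eq_zero le_rfl (hPi0 i)).mono (by simp [hmt])
    · refine PadicInt.gaussOrderGE_of_subst_succ_eq_pow hE.1 (hE.coeff_one ▸ isUnit_one) hPi0
        (fun i => by rw [hsubst, hsubst, pow_succ, pow_mul]) (by bound) (by positivity) ?_ i
      calc ((p : ℚ) - 1) * (p : ℚ) ^ (mt - 1) ≤ ((p : ℚ) - 1) * (p : ℚ) ^ (mt - 2 + 1) := by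
            exact mul_le_mul_of_nonneg_left (pow_le_pow_right₀ hp (by omega)) (by linarith)
        _ = p * ((p : ℚ) ^ (mt - 2) * ((p : ℚ) - 1)) := by ring
  simp only [ordRge_iff_gaussOrderGE]
  exact ⟨fun i hi => (key i).mono (le_min le_rfl (pow_le_pow_right₀ hp hi)),
    fun i hi => (key i).mono (le_min (pow_le_pow_right₀ hp hi) le_rfl)⟩

/-- Let `m̃ = 1 + (first index i with d_i = D)`. With `ord_R` as in `ordRge`
(`ord_R = ord_T` if `m̃ = 1`, the `(p^θ,T)`-adic order, `θ = 1/(p^(m̃−2)(p−1))`, if `m̃ ≥ 2`):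
`ord_R(π_i) ≥ p^i` for `0 ≤ i ≤ m̃−1` and `ord_R(π_i) ≥ p^(m̃−1)` for `i ≥ m̃−1`. -/
theorem pi_i_ordR_bounds (p a : ℕ) [Fact p.Prime] (ha : 1 ≤ a)
    (E : PowerSeries ℤ_[p]) (hE : IsArtinHasse p E)
    (Pi : ℕ → PowerSeries ℤ_[p]) (hPi : ∀ i, IsPiAH p E i (Pi i))
    (d : ℕ → ℕ) (hd0 : 0 < d 0)
    (D : ℕ) (hD : IsGreatest (Set.range d) D)
    (mt : ℕ) (hmt1 : 1 ≤ mt) (hmt2 : d (mt - 1) = D) (hmt3 : ∀ i < mt - 1, d i ≠ D) :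
    (∀ i ≤ mt - 1, ordRge p mt (Pi i) ((p : ℚ) ^ i)) ∧
      (∀ i, mt - 1 ≤ i → ordRge p mt (Pi i) ((p : ℚ) ^ (mt - 1))) :=
  pi_i_ordR_bounds_general p E hE Pi hPi mt

end
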